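/- The van Est integration map VE⁻¹ : Λ•V → T•(Sym V), defined on ξ₁ ∧ ⋯ ∧ ξ_ℓ (ξᵢ ∈ V) by VE⁻¹(ξ₁ ∧ ⋯ ∧ ξ_ℓ) = (1/ℓ!) Σ_{σ ∈ S_ℓ} sign(σ) ξ_{σ(1)} ⊗ ⋯ ⊗ ξ_{σ(ℓ)}, is a chain map into the kernel of the coalgebra differential (δ_ca ∘ VE⁻¹ = 0), and satisfies VE ∘ VE⁻¹ = id on Λ•V, where VE(X₁ ⊗ ⋯ ⊗ X_k) = pr_V(X₁) ∧ ⋯ ∧ pr_V(X_k). -/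

import Mathlib

open TensorProduct

/-! ### The symmetric algebra of a module

Mathlib does not yet have the symmetric algebra, so we construct it as the
quotient of the tensor algebra by the commutativity relation. -/

/-- The relation on the tensor algebra whose quotient is the symmetric algebra. -/
inductive SymRel (R : Type*) [CommRing R] (V : Type*) [AddCommGroup V] [Module R V] :
    TensorAlgebra R V → TensorAlgebra R V → Prop
  | mul_comm (a b : TensorAlgebra R V) : SymRel R V (a * b) (b * a)

/-- The symmetric algebra `Sym V` of an `R`-module `V`. -/
abbrev SymmAlg (R : Type*) [CommRing R] (V : Type*) [AddCommGroup V] [Module R V] : Type _ :=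
  RingQuot (SymRel R V)

variable (R : Type*) [CommRing R] (V : Type*) [AddCommGroup V] [Module R V]

noncomputable instance : CommRing (SymmAlg R V) :=
  { (inferInstance : Ring (RingQuot (SymRel R V))) with
    mul_comm := by
      intro a b
      obtain ⟨x, rfl⟩ := RingQuot.mkRingHom_surjective (SymRel R V) a
      obtain ⟨y, rfl⟩ := RingQuot.mkRingHom_surjective (SymRel R V) b
      rw [← map_mul, ← map_mul, RingQuot.mkRingHom_rel (SymRel.mul_comm x y)] }

/-- The canonical inclusion `V →ₗ Sym V` of the generators. -/
noncomputable def ιS : V →ₗ[R] SymmAlg R V :=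
  (RingQuot.mkAlgHom R (SymRel R V)).toLinearMap ∘ₗ TensorAlgebra.ι R

/-! ### Tensor powers and the coalgebra differential -/

open scoped TensorProduct

section Tpow

variable (R : Type*) [CommRing R] (S : Type*) [AddCommGroup S] [Module R S]

/-- The `k`-th tensor power `T^k S` of an `R`-module `S`. -/
abbrev Tpow (k : ℕ) : Type _ := PiTensorProduct R (fun _ : Fin k => S)

/-- Concatenation of tensor powers, `T^a S ⊗ T^b S →ₗ T^(a+b) S`:
the tensor multiplication of the tensor algebra. -/
noncomputable def concat (a b : ℕ) : Tpow R S a ⊗[R] Tpow R S b →ₗ[R] Tpow R S (a + b) :=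
  (PiTensorProduct.reindex R (fun _ : Fin a ⊕ Fin b => S) finSumFinEquiv).toLinearMap ∘ₗ
    (PiTensorProduct.tmulEquiv R S).toLinearMap

/-- The canonical identification `S ≃ T^1 S`. -/
noncomputable def toT1 : S ≃ₗ[R] Tpow R S 1 :=
  (PiTensorProduct.subsingletonEquiv (R := R) (s := fun _ : Fin 1 => S) (0 : Fin 1)).symm

/-- The canonical identification `T^(k+1) S ≃ T^k S ⊗ S` splitting off the last factor. -/
noncomputable def unsnoc (k : ℕ) : Tpow R S (k + 1) ≃ₗ[R] Tpow R S k ⊗[R] S :=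
  ((PiTensorProduct.reindex R (fun _ : Fin (k + 1) => S) finSumFinEquiv.symm).trans
      (PiTensorProduct.tmulEquiv R S).symm).trans
    (TensorProduct.congr (LinearEquiv.refl R _) (toT1 R S).symm)

/-- The canonical identification `S ⊗ S ≃ T^2 S`. -/
noncomputable def toT2 : S ⊗[R] S →ₗ[R] Tpow R S 2 :=
  concat R S 1 1 ∘ₗ TensorProduct.map (toT1 R S).toLinearMap (toT1 R S).toLinearMap

/-- The identification `T^a S ≃ T^b S` for `a = b`. -/
noncomputable def tcast {a b : ℕ} (h : a = b) : Tpow R S a ≃ₗ[R] Tpow R S b :=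
  PiTensorProduct.reindex R (fun _ : Fin a => S) (finCongr h)

variable {S} in
/-- The coalgebra differential `δ_ca : T^k S → T^(k+1) S` obtained by extending
`−Δ̄ : S → S ⊗ S ≃ T² S` (for a given reduced coproduct `Δ̄ = Db`) as a graded
derivation with respect to the tensor product, i.e.
`δ_ca = ∑_{i=1}^k (−1)^i (id^{⊗(i−1)} ⊗ Δ̄ ⊗ id^{⊗(k−i)})`, here realized through the
recursion `δ_ca(X ⊗ φ) = δ_ca(X) ⊗ φ + (−1)^k X ⊗ (−Δ̄ φ)` for `X ∈ T^k S`, `φ ∈ S`. -/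
noncomputable def deltaCa (Db : S →ₗ[R] S ⊗[R] S) : (k : ℕ) → Tpow R S k →ₗ[R] Tpow R S (k + 1)
  | 0 => 0
  | (k + 1) =>
      (concat R S (k + 1) 1 ∘ₗ TensorProduct.map (deltaCa Db k) (toT1 R S).toLinearMap
        + ((-1 : ℤ) ^ k) •
          (concat R S k 2 ∘ₗ TensorProduct.map LinearMap.id (toT2 R S ∘ₗ (-Db))))
        ∘ₗ (unsnoc R S (k + 1 - 1)).toLinearMap

end Tpow

section VE

variable {R : Type*} [CommRing R] [Algebra ℚ R] {V : Type*} [AddCommGroup V] [Module R V]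

/-- The total module `⨁ₖ T^k(Sym V)` of the coalgebra complex. -/
abbrev TcaTot (R : Type*) [CommRing R] (V : Type*) [AddCommGroup V] [Module R V] :=
  DirectSum ℕ (fun k => Tpow R (SymmAlg R V) k)

/-- The total coalgebra differential `δ_ca` on `⨁ₖ T^k(Sym V)`, for the reduced
shuffle coproduct `Db`. -/
noncomputable def deltaCaTot
    (Db : SymmAlg R V →ₗ[R] SymmAlg R V ⊗[R] SymmAlg R V) :
    TcaTot R V →ₗ[R] TcaTot R V :=
  DirectSum.toModule R ℕ _ fun k =>
    DirectSum.lof R ℕ (fun k => Tpow R (SymmAlg R V) k) (k + 1) ∘ₗ deltaCa R Db k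

/-- The van Est differentiation map
`VE(X₁ ⊗ ⋯ ⊗ X_k) = pr_V(X₁) ∧ ⋯ ∧ pr_V(X_k) : T^•(Sym V) → Λ^• V`. -/
noncomputable def vanEstMap (prV : SymmAlg R V →ₗ[R] V) :
    TcaTot R V →ₗ[R] ExteriorAlgebra R V :=
  DirectSum.toModule R ℕ _ fun k =>
    PiTensorProduct.lift
      ((MultilinearMap.mkPiAlgebraFin R k (ExteriorAlgebra R V)).compLinearMap
        fun _ => ExteriorAlgebra.ι R ∘ₗ prV)

/-- The van Est integration map
`VE⁻¹(ξ₁ ∧ ⋯ ∧ ξ_ℓ) = (1/ℓ!) ∑_σ sign(σ) ξ_(σ(1)) ⊗ ⋯ ⊗ ξ_(σ(ℓ))`. -/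
noncomputable def vanEstInv : ExteriorAlgebra R V →ₗ[R] TcaTot R V :=
  ExteriorAlgebra.liftAlternating fun ℓ =>
    (DirectSum.lof R ℕ (fun k => Tpow R (SymmAlg R V) k) ℓ).compAlternatingMap
      (algebraMap ℚ R ((ℓ.factorial : ℚ)⁻¹) •
        MultilinearMap.alternatization
          ((PiTensorProduct.tprod R).compLinearMap fun _ : Fin ℓ => ιS R V))

end VE

/-! On a generator `ξ₁ ∧ ⋯ ∧ ξ_ℓ` of `Λ V`, `VE⁻¹` is `1/ℓ!` times the alternatization of
`ξ₁ ⊗ ⋯ ⊗ ξ_ℓ`, and post-composing with a linear map commutes with alternatization. For `δ_ca`,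
each of these pure tensors is a cocycle because `Δ̄` kills the primitive elements `V ⊂ Sym V`.
For `VE`, `VE(ξ₁ ⊗ ⋯ ⊗ ξ_ℓ) = ξ₁ ∧ ⋯ ∧ ξ_ℓ` is already alternating in the `ξᵢ`, so its
alternatization is `ℓ!` times itself. -/

section DeltaCa

variable {R : Type*} [CommRing R] {S : Type*} [AddCommGroup S] [Module R S]

theorem unsnoc_tprod (k : ℕ) (f : Fin (k + 1) → S) :
    unsnoc R S k (PiTensorProduct.tprod R f)
      = (PiTensorProduct.tprod R fun i : Fin k => f i.castSucc) ⊗ₜ[R] f (Fin.last k) := by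
  simp only [unsnoc, toT1, LinearEquiv.trans_apply, PiTensorProduct.reindex_tprod,
    PiTensorProduct.tmulEquiv_symm_apply, TensorProduct.congr_tmul, LinearEquiv.refl_apply,
    LinearEquiv.symm_symm, PiTensorProduct.subsingletonEquiv_apply_tprod]
  rfl

theorem deltaCa_tprod_eq_zero (Db : S →ₗ[R] S ⊗[R] S) {k : ℕ} {f : Fin k → S}
    (hf : ∀ i, Db (f i) = 0) : deltaCa R Db k (PiTensorProduct.tprod R f) = 0 := by
  induction k with
  | zero => rfl
  | succ k ih =>
    rw [deltaCa, LinearMap.comp_apply, LinearEquiv.coe_coe]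
    -- the recursion splits off the last factor via `unsnoc (k + 1 - 1)`, only defeq to `unsnoc k`
    erw [unsnoc_tprod k f]
    rw [LinearMap.add_apply, LinearMap.comp_apply, map_tmul, ih fun i => hf i.castSucc,
      zero_tmul, map_zero, zero_add]
    have h : (concat R S k 2 ∘ₗ map LinearMap.id (toT2 R S ∘ₗ (-Db)))
        ((PiTensorProduct.tprod R fun i => f i.castSucc) ⊗ₜ f (Fin.last k)) = 0 := by
      simp [hf]
    exact (congrArg ((-1 : ℤ) ^ k • ·) h).trans (zsmul_zero _)

end DeltaCa

section VanEst

variable {R : Type*} [CommRing R] {V : Type*} [AddCommGroup V] [Module R V]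

open ExteriorAlgebra

theorem vanEstMap_lof_tprod (prV : SymmAlg R V →ₗ[R] V) (hprV : ∀ v, prV (ιS R V v) = v)
    {ℓ : ℕ} (v : Fin ℓ → V) :
    vanEstMap prV (DirectSum.lof R ℕ (fun k => Tpow R (SymmAlg R V) k) ℓ
      (PiTensorProduct.tprod R fun i => ιS R V (v i))) = ιMulti R ℓ v := by
  simp [vanEstMap, hprV, ιMulti_apply]

variable [Algebra ℚ R]

theorem comp_vanEstInv {N : Type*} [AddCommGroup N] [Module R N] (g : TcaTot R V →ₗ[R] N) :
    g ∘ₗ vanEstInv = liftAlternating fun ℓ =>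
      algebraMap ℚ R ((ℓ.factorial : ℚ)⁻¹) • MultilinearMap.alternatization
        (LinearMap.compMultilinearMap (g ∘ₗ DirectSum.lof R ℕ _ ℓ)
          ((PiTensorProduct.tprod R).compLinearMap fun _ : Fin ℓ => ιS R V)) := by
  rw [vanEstInv, ← liftAlternating_comp]
  congr 1
  funext ℓ
  ext v
  simp [LinearMap.compMultilinearMap_alternatization]

theorem deltaCaTot_comp_vanEstInv (Db : SymmAlg R V →ₗ[R] SymmAlg R V ⊗[R] SymmAlg R V)
    (hDb : ∀ v, Db (ιS R V v) = 0) : deltaCaTot Db ∘ₗ vanEstInv = 0 := by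
  rw [comp_vanEstInv, ← map_zero (liftAlternating (R := R) (M := V) (N := TcaTot R V))]
  congr 1
  funext ℓ
  have h : LinearMap.compMultilinearMap (deltaCaTot Db ∘ₗ DirectSum.lof R ℕ _ ℓ)
      ((PiTensorProduct.tprod R).compLinearMap fun _ : Fin ℓ => ιS R V) = 0 := by
    ext v
    simp [deltaCaTot, deltaCa_tprod_eq_zero Db fun i => hDb (v i)]
  rw [h, map_zero, smul_zero, Pi.zero_apply]

theorem vanEstMap_comp_vanEstInv (prV : SymmAlg R V →ₗ[R] V)
    (hprV : ∀ v, prV (ιS R V v) = v) : vanEstMap prV ∘ₗ vanEstInv = LinearMap.id := by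
  rw [comp_vanEstInv, ← liftAlternating_ιMulti]
  congr 1
  funext ℓ
  have h : LinearMap.compMultilinearMap (vanEstMap prV ∘ₗ DirectSum.lof R ℕ _ ℓ)
      ((PiTensorProduct.tprod R).compLinearMap fun _ : Fin ℓ => ιS R V)
      = (ιMulti R ℓ).toMultilinearMap :=
    MultilinearMap.ext fun v => vanEstMap_lof_tprod prV hprV v
  rw [h, AlternatingMap.coe_alternatization,
    Fintype.card_fin, ← Nat.cast_smul_eq_nsmul R, smul_smul, ← map_natCast (algebraMap ℚ R),
    ← map_mul, inv_mul_cancel₀ (by exact_mod_cast ℓ.factorial_ne_zero), map_one, one_smul]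

end VanEst

theorem vanEst_integration_general
    {R : Type*} [CommRing R] [Algebra ℚ R]
    {V : Type*} [AddCommGroup V] [Module R V]
    (Δ : SymmAlg R V →ₐ[R] SymmAlg R V ⊗[R] SymmAlg R V)
    (hΔ : ∀ v : V, Δ (ιS R V v) = 1 ⊗ₜ[R] ιS R V v + ιS R V v ⊗ₜ[R] 1)
    (prV : SymmAlg R V →ₗ[R] V)
    (hprV1 : ∀ v : V, prV (ιS R V v) = v)
    (Db : SymmAlg R V →ₗ[R] SymmAlg R V ⊗[R] SymmAlg R V)
    (hDb : Db = Δ.toLinearMap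
      - (TensorProduct.mk R (SymmAlg R V) (SymmAlg R V) 1
        + (TensorProduct.mk R (SymmAlg R V) (SymmAlg R V)).flip 1)) :
    (∀ ξ : ExteriorAlgebra R V, deltaCaTot Db (vanEstInv ξ) = 0) ∧
    (∀ ξ : ExteriorAlgebra R V, vanEstMap prV (vanEstInv ξ) = ξ) := by
  have hDb_ιS (v : V) : Db (ιS R V v) = 0 := by
    rw [hDb, LinearMap.sub_apply, LinearMap.add_apply, AlgHom.toLinearMap_apply, hΔ,
      TensorProduct.mk_apply, LinearMap.flip_apply, TensorProduct.mk_apply]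
    abel
  exact ⟨LinearMap.congr_fun (deltaCaTot_comp_vanEstInv Db hDb_ιS),
    LinearMap.congr_fun (vanEstMap_comp_vanEstInv prV hprV1)⟩

/-- **The van Est integration map.**
The map `VE⁻¹ : Λ^• V → T^•(Sym V)`,
`VE⁻¹(ξ₁ ∧ ⋯ ∧ ξ_ℓ) = (1/ℓ!) ∑_{σ ∈ S_ℓ} sign(σ) ξ_(σ(1)) ⊗ ⋯ ⊗ ξ_(σ(ℓ))`,
is a chain map into the kernel of the coalgebra differential (`δ_ca ∘ VE⁻¹ = 0`) and
satisfies `VE ∘ VE⁻¹ = id` on `Λ^• V`, where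
`VE(X₁ ⊗ ⋯ ⊗ X_k) = pr_V(X₁) ∧ ⋯ ∧ pr_V(X_k)`. -/
theorem vanEst_integration
    {R : Type*} [CommRing R] [Algebra ℚ R]
    {V : Type*} [AddCommGroup V] [Module R V]
    (Δ : SymmAlg R V →ₐ[R] SymmAlg R V ⊗[R] SymmAlg R V)
    (hΔ : ∀ v : V, Δ (ιS R V v) = 1 ⊗ₜ[R] ιS R V v + ιS R V v ⊗ₜ[R] 1)
    (prV : SymmAlg R V →ₗ[R] V)
    (hprV1 : ∀ v : V, prV (ιS R V v) = v)
    (hprV0 : ∀ (s : ℕ) (x : Fin s → V), s ≠ 1 → prV (∏ j, ιS R V (x j)) = 0)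
    (Db : SymmAlg R V →ₗ[R] SymmAlg R V ⊗[R] SymmAlg R V)
    (hDb : Db = Δ.toLinearMap
      - (TensorProduct.mk R (SymmAlg R V) (SymmAlg R V) 1
        + (TensorProduct.mk R (SymmAlg R V) (SymmAlg R V)).flip 1)) :
    (∀ ξ : ExteriorAlgebra R V, deltaCaTot Db (vanEstInv ξ) = 0) ∧
    (∀ ξ : ExteriorAlgebra R V, vanEstMap prV (vanEstInv ξ) = ξ) :=
  vanEst_integration_general Δ hΔ prV hprV1 Db hDb
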